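/- arXiv:2102.12287 — 4 statements merged into one kernel-verified Lean document; each statement's English description precedes it below -/
import Mathlib

section
/- Let 1 ≤ p, r, s ≤ m be integers with p ≥ r and r + s = k + 1. If η ∈ Λ^p M, a ∈ R is a non-zero-divisor, n ≥ 0, and a^n · η = Σ_{J ∈ 𝒥(r,k)} ω_J ∧ γ_J for some γ_J ∈ Λ^{p−r} M, then ω_I ∧ η = 0 for every I ∈ 𝒥(s,k). -/
/-!
Since `r + s = k + 1`, each product `ω_I ∧ ω_J` with `I ∈ 𝒥(s,k)`, `J ∈ 𝒥(r,k)` repeats some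
`ω_j` and so vanishes; hence `aⁿ (ω_I ∧ η) = Σ_J ω_I ∧ ω_J ∧ γ_J = 0`. The exterior algebra of a
free module is free, so multiplication by the non-zero-divisor `aⁿ` is injective on it.
-/

open ExteriorAlgebra

/-- `ω_J = ω_{j₁} ∧ ⋯ ∧ ω_{j_r}` for a strictly increasing multi-index `J`, encoded as a
finite set `s` of indices listed in increasing order. -/
noncomputable def wedgeProd (R : Type*) [CommRing R] {M : Type*} [AddCommGroup M] [Module R M]
    {k : ℕ} (ω : Fin k → M) (s : Finset (Fin k)) : ExteriorAlgebra R M :=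
  ((s.sort (· ≤ ·)).map fun j => ExteriorAlgebra.ι R (ω j)).prod

namespace ExteriorAlgebra

variable {R : Type*} [CommRing R] {M : Type*} [AddCommGroup M] [Module R M]

instance instModuleFree [Module.Free R M] : Module.Free R (ExteriorAlgebra R M) := by
  classical
  let : LinearOrder (Module.Free.ChooseBasisIndex R M) := linearOrderOfSTO WellOrderingRel
  exact .of_basis (Module.Free.chooseBasis R M).ExteriorAlgebra

theorem list_prod_map_ι_eq_zero_of_not_nodup {α : Type*} (f : α → M) {l : List α}
    (hl : ¬ l.Nodup) : (l.map fun j => ι R (f j)).prod = 0 := by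
  have h_ιMulti : (l.map fun j => ι R (f j)).prod = ιMulti R l.length (fun i => f (l.get i)) := by
    rw [ιMulti_apply, ← List.ofFn_get l, List.map_ofFn]
    simp [Function.comp_def]
  rw [List.nodup_iff_injective_get, Function.Injective] at hl
  push Not at hl
  obtain ⟨i, j, hij, hne⟩ := hl
  rw [h_ιMulti]
  exact AlternatingMap.map_eq_zero_of_eq _ _ (by rw [hij]) hne

end ExteriorAlgebra

theorem wedgeProd_mul_wedgeProd_eq_zero {R : Type*} [CommRing R] {M : Type*} [AddCommGroup M]
    [Module R M] {k : ℕ} (ω : Fin k → M) {I J : Finset (Fin k)} (h : k < I.card + J.card) :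
    wedgeProd R ω I * wedgeProd R ω J = 0 := by
  rw [wedgeProd, wedgeProd, ← List.prod_append, ← List.map_append]
  refine list_prod_map_ι_eq_zero_of_not_nodup ω fun hnd => ?_
  have hlen := hnd.length_le_card
  rw [List.length_append, Finset.length_sort, Finset.length_sort, Fintype.card_fin] at hlen
  omega

theorem stmt_2_general {R : Type*} [CommRing R] {M : Type*} [AddCommGroup M] [Module R M]
    {m k : ℕ} (b : Module.Basis (Fin m) R M)
    (ω : Fin k → M) (r s : ℕ)
    (hrs : r + s = k + 1)
    (η : ExteriorAlgebra R M)
    (a : R) (ha : a ∈ nonZeroDivisors R) (n : ℕ)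
    (γ : Finset (Fin k) → ExteriorAlgebra R M)
    (hrep : a ^ n • η = ∑ J ∈ Finset.univ.powersetCard r, wedgeProd R ω J * γ J) :
    ∀ I ∈ Finset.univ.powersetCard s, wedgeProd R ω I * η = 0 := by
  intro I hI
  have hIcard : I.card = s := (Finset.mem_powersetCard.mp hI).2
  have h_smul : a ^ n • (wedgeProd R ω I * η) = 0 := by
    rw [← mul_smul_comm, hrep, Finset.mul_sum]
    refine Finset.sum_eq_zero fun J hJ => ?_
    have hJcard : J.card = r := (Finset.mem_powersetCard.mp hJ).2
    rw [← mul_assoc, wedgeProd_mul_wedgeProd_eq_zero ω (by omega), zero_mul]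
  have := Module.Free.of_basis b
  exact (isRegular_iff_mem_nonZeroDivisors.mpr (pow_mem ha n)).smul_eq_zero_iff_right.mp h_smul

theorem stmt_2 {R : Type*} [CommRing R] {M : Type*} [AddCommGroup M] [Module R M]
    {m k : ℕ} (b : Module.Basis (Fin m) R M) (hk1 : 1 ≤ k) (hkm : k ≤ m)
    (ω : Fin k → M) (p r s : ℕ)
    (hp1 : 1 ≤ p) (hpm : p ≤ m) (hr1 : 1 ≤ r) (hrm : r ≤ m) (hs1 : 1 ≤ s) (hsm : s ≤ m)
    (hrp : r ≤ p) (hrs : r + s = k + 1)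
    (η : ExteriorAlgebra R M) (hη : η ∈ ⋀[R]^p M)
    (a : R) (ha : a ∈ nonZeroDivisors R) (n : ℕ)
    (γ : Finset (Fin k) → ExteriorAlgebra R M) (hγ : ∀ J, γ J ∈ ⋀[R]^(p - r) M)
    (hrep : a ^ n • η = ∑ J ∈ Finset.univ.powersetCard r, wedgeProd R ω J * γ J) :
    ∀ I ∈ Finset.univ.powersetCard s, wedgeProd R ω I * η = 0 :=
  stmt_2_general b ω r s hrs η a ha n γ hrep
end

section
/- If depth(I(Ω)) ≥ 2 (equivalently, I(Ω) contains a regular sequence of length 2), then every η ∈ M satisfying Ω ∧ η = 0 can be represented as η = Σ_{i=1}^k a_i ω_i with coefficients a_i ∈ R. -/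
/-!
By Cramer's rule, `Ω ∧ η = 0` forces `I(Ω) • η ⊆ span ω`: the coefficients of `Ω` in the basis
of `⋀^k M` are minors `det (fⱼ (ωᵢ))`, and expanding the vanishing `(k+1)`-minors of `(ω, η)`
along the last column writes each such minor times `η` as a combination of the `ωᵢ`.
A non-zero-divisor `x ∈ I(Ω)` makes the `ωᵢ` linearly independent, because a relation
`∑ aᵢ ωᵢ = 0` gives `aᵢ Ω = 0`, hence `aᵢ x = 0`. Writing `x η = ∑ pᵢ ωᵢ` and `y η = ∑ qᵢ ωᵢ`,
independence gives `y pᵢ = x qᵢ`, so `pᵢ = rᵢ x` since `y` is regular modulo `x`, and cancelling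
`x` yields `η = ∑ rᵢ ωᵢ`.
-/
open ExteriorAlgebra

/-- A list `a₁, …, a_q` of elements of `R` is a regular sequence: the ideal it generates is
proper, and each `aᵢ` is a non-zero-divisor on `R ⧸ (a₁, …, a_{i-1})`. -/
def IsRegSeq (R : Type*) [CommRing R] (l : List R) : Prop :=
  Ideal.span {x | x ∈ l} ≠ ⊤ ∧
    ∀ i : Fin l.length, ∀ r : R,
      l.get i * r ∈ Ideal.span {x | x ∈ l.take i.1} →
        r ∈ Ideal.span {x | x ∈ l.take i.1}

/-- The ideal `I(x)` generated by the coefficients of an element `x` of the exterior algebra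
of a (finite free) module `M` in an induced basis; equivalently (and basis-independently),
the ideal generated by the values `φ x` over all linear functionals `φ`. -/
def coeffIdeal (R : Type*) [CommRing R] {M : Type*} [AddCommGroup M] [Module R M]
    (x : ExteriorAlgebra R M) : Ideal R :=
  Ideal.span (Set.range fun φ : Module.Dual R (ExteriorAlgebra R M) => φ x)

namespace ExteriorAlgebra

variable {R M : Type*} [CommRing R] [AddCommGroup M] [Module R M]

theorem ιMulti_snoc {n : ℕ} (v : Fin n → M) (x : M) :
    ιMulti R (n + 1) (Fin.snoc v x) = ιMulti R n v * ι R x := by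
  rw [ιMulti_apply, ιMulti_apply, List.ofFn_succ']
  simp

theorem det_smul_mem_span_of_ιMulti_snoc_eq_zero [Module.Projective R M] {n : ℕ}
    {v : Fin n → M} {x : M} (hvx : ιMulti R (n + 1) (Fin.snoc v x) = 0)
    (f : Fin n → Module.Dual R M) :
    (Matrix.of fun i j => f j (v i)).det • x ∈ Submodule.span R (Set.range v) := by
  set u : Fin (n + 1) → M := Fin.snoc v x
  set d : Fin (n + 1) → R := fun i => (Matrix.of fun r c => f c (u (i.succAbove r))).det
  -- Each `g (∑ ...)` is the Laplace expansion along the last column of the minor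
  -- `det ((snoc f g)ⱼ (uᵢ))`, which vanishes with `ιMulti u`.
  have hlaplace : ∑ i : Fin (n + 1), ((-1 : R) ^ ((i : ℕ) + n) * d i) • u i = 0 := by
    refine (Module.forall_dual_apply_eq_zero_iff R _).mp fun g => ?_
    have h0 := exteriorPower.pairingDual_ιMulti_ιMulti (Fin.snoc f g) u
    rw [show exteriorPower.ιMulti R (n + 1) u = 0 from Subtype.ext hvx, map_zero,
      Matrix.det_succ_column _ (Fin.last n)] at h0
    simp only [map_sum, map_smul, smul_eq_mul]
    rw [h0]
    refine Finset.sum_congr rfl fun i _ => ?_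
    have hminor :
        (Matrix.of fun i j => Fin.snoc (α := fun _ => Module.Dual R M) f g j (u i)).submatrix
          i.succAbove (Fin.last n).succAbove = Matrix.of fun r c => f c (u (i.succAbove r)) := by
      ext r c
      simp [Fin.succAbove_last]
    simp only [hminor, Matrix.of_apply, Fin.snoc_last, Fin.val_last, d]
    ring
  have hlast : ((-1 : R) ^ ((Fin.last n : ℕ) + n) * d (Fin.last n)) • u (Fin.last n) =
      (Matrix.of fun i j => f j (v i)).det • x := by
    simp [d, u, Fin.succAbove_last, ← two_mul, pow_mul]
  rw [Fin.sum_univ_castSucc, hlast, add_comm, ← eq_neg_iff_add_eq_zero] at hlaplace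
  rw [hlaplace]
  exact neg_mem <| Submodule.sum_mem _ fun j _ =>
    Submodule.smul_mem _ _ <| Submodule.subset_span ⟨j, by simp [u]⟩

end ExteriorAlgebra

section

variable {R M : Type*} [CommRing R] [AddCommGroup M] [Module R M]

theorem AlternatingMap.smul_map_eq_zero_of_sum_smul_eq_zero {ι N : Type*} [Fintype ι]
    [AddCommGroup N] [Module R N] (f : M [⋀^ι]→ₗ[R] N) {v : ι → M} {a : ι → R}
    (h : ∑ i, a i • v i = 0) (i : ι) : a i • f v = 0 := by
  classical
  have hupdate := f.map_update_sum Finset.univ i (fun j => a j • v j) v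
  rw [h, f.map_update_zero, Finset.sum_eq_single i, f.map_update_smul,
    Function.update_eq_self] at hupdate
  · exact hupdate.symm
  · intro j _ hji
    rw [f.map_update_smul, f.map_update_self _ hji.symm, smul_zero]
  · simp

theorem wedgeProd_univ {k : ℕ} (ω : Fin k → M) :
    wedgeProd R ω Finset.univ = ιMulti R k ω := by
  rw [wedgeProd, Fin.sort_univ, ιMulti_apply, List.ofFn_eq_map]

theorem coeffIdeal_ιMulti_le_span_det {ι : Type*} [LinearOrder ι] (b : Module.Basis ι R M)
    {n : ℕ} (v : Fin n → M) :
    coeffIdeal R (ιMulti R n v) ≤ Ideal.span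
      (Set.range fun f : Fin n → Module.Dual R M => (Matrix.of fun i j => f j (v i)).det) := by
  rw [coeffIdeal, Ideal.span_le]
  rintro _ ⟨φ, rfl⟩
  dsimp only
  have hv : ιMulti R n v = ((exteriorPower.ιMulti R n v : ⋀[R]^n M) : ExteriorAlgebra R M) := rfl
  rw [hv, ← (b.exteriorPower n).linearCombination_repr (exteriorPower.ιMulti R n v),
    Finsupp.linearCombination_apply, Finsupp.sum, Submodule.coe_sum, map_sum]
  refine Ideal.sum_mem _ fun s _ => ?_
  rw [Submodule.coe_smul, map_smul, smul_eq_mul, exteriorPower.basis_repr_apply,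
    exteriorPower.ιMultiDual_apply_ιMulti]
  exact Ideal.mul_mem_right _ _ (Ideal.subset_span ⟨_, rfl⟩)

theorem coeffIdeal_ιMulti_le_colon {ι : Type*} [LinearOrder ι] (b : Module.Basis ι R M)
    {n : ℕ} {v : Fin n → M} {x : M} (hvx : ιMulti R (n + 1) (Fin.snoc v x) = 0) :
    coeffIdeal R (ιMulti R n v) ≤ (Submodule.span R (Set.range v)).colon {x} := by
  have := Module.Projective.of_basis b
  refine (coeffIdeal_ιMulti_le_span_det b v).trans (Ideal.span_le.mpr ?_)
  rintro _ ⟨f, rfl⟩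
  exact Submodule.mem_colon_singleton.mpr (det_smul_mem_span_of_ιMulti_snoc_eq_zero hvx f)

theorem mul_eq_zero_of_smul_eq_zero_of_mem_coeffIdeal {Ω : ExteriorAlgebra R M} {c r : R}
    (hc : c • Ω = 0) (hr : r ∈ coeffIdeal R Ω) : c * r = 0 := by
  have hker : coeffIdeal R Ω ≤ LinearMap.ker (LinearMap.mulLeft R c) := by
    rw [coeffIdeal, Ideal.span_le]
    rintro _ ⟨φ, rfl⟩
    simp [← smul_eq_mul, ← map_smul, hc]
  simpa using hker hr

theorem linearIndependent_of_mem_coeffIdeal_ιMulti {n : ℕ} {v : Fin n → M} {x : R}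
    (hx : IsSMulRegular R x) (hxI : x ∈ coeffIdeal R (ιMulti R n v)) : LinearIndependent R v :=
  Fintype.linearIndependent_iff.mpr fun a ha i => hx.right_eq_zero_of_smul <| by
    rw [smul_eq_mul, mul_comm]
    exact mul_eq_zero_of_smul_eq_zero_of_mem_coeffIdeal
      ((ιMulti R n).smul_map_eq_zero_of_sum_smul_eq_zero ha i) hxI

theorem IsRegSeq.pair {x y : R} (h : IsRegSeq R [x, y]) :
    IsSMulRegular R x ∧ ∀ r, y * r ∈ Ideal.span {x} → r ∈ Ideal.span {x} := by
  refine ⟨IsSMulRegular.of_right_eq_zero_of_smul fun r hr => ?_, fun r hr => ?_⟩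
  · simpa using h.2 ⟨0, by simp⟩ r (by simpa using hr)
  · simpa using h.2 ⟨1, by simp⟩ r (by simpa using hr)

theorem mem_span_of_smul_mem_span {ι : Type*} [Fintype ι] {v : ι → M}
    (hv : LinearIndependent R v) {x y : R} (hx : IsSMulRegular M x)
    (hy : ∀ r, y * r ∈ Ideal.span {x} → r ∈ Ideal.span {x}) {η : M}
    (hxη : x • η ∈ Submodule.span R (Set.range v)) (hyη : y • η ∈ Submodule.span R (Set.range v)) :
    η ∈ Submodule.span R (Set.range v) := by
  obtain ⟨p, hp⟩ := (Submodule.mem_span_range_iff_exists_fun R).mp hxη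
  obtain ⟨q, hq⟩ := (Submodule.mem_span_range_iff_exists_fun R).mp hyη
  have hsyzygy : ∀ i, y * p i = x * q i := fun i => sub_eq_zero.mp <|
    Fintype.linearIndependent_iff.mp hv (fun i => y * p i - x * q i) (by
      simp only [sub_smul, mul_smul, Finset.sum_sub_distrib, ← Finset.smul_sum, hp, hq,
        smul_comm y x, sub_self]) i
  choose r hr using fun i => Ideal.mem_span_singleton'.mp <|
    hy _ (hsyzygy i ▸ Ideal.mem_span_singleton'.mpr ⟨q i, mul_comm _ _⟩)
  have hη : η = ∑ i, r i • v i := hx <| by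
    simp only [← hp, Finset.smul_sum, smul_smul, mul_comm x, hr]
  exact (Submodule.mem_span_range_iff_exists_fun R).mpr ⟨r, hη.symm⟩

end

theorem stmt_3_general {R : Type*} [CommRing R] {M : Type*} [AddCommGroup M] [Module R M]
    {m k : ℕ} (b : Module.Basis (Fin m) R M)
    (ω : Fin k → M)
    (hDC : ∃ l : List R, l.length = 2 ∧
      (∀ x ∈ l, x ∈ coeffIdeal R (wedgeProd R ω Finset.univ)) ∧ IsRegSeq R l)
    (η : M) (hη : wedgeProd R ω Finset.univ * ExteriorAlgebra.ι R η = 0) :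
    ∃ a : Fin k → R, η = ∑ i, a i • ω i := by
  obtain ⟨l, hl2, hlI, hreg⟩ := hDC
  obtain ⟨x, y, rfl⟩ := List.length_eq_two.mp hl2
  obtain ⟨hx, hy⟩ := hreg.pair
  rw [wedgeProd_univ] at hlI hη
  have hcolon := coeffIdeal_ιMulti_le_colon b (x := η) (by rw [ιMulti_snoc, hη])
  have hxI := hlI x (by simp)
  have hxM : IsSMulRegular M x :=
    b.isTorsionFree.isSMulRegular (isLeftRegular_iff_isRegular.mp hx)
  obtain ⟨a, ha⟩ := (Submodule.mem_span_range_iff_exists_fun R).mp <|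
    mem_span_of_smul_mem_span (linearIndependent_of_mem_coeffIdeal_ιMulti hx hxI) hxM hy
      (Submodule.mem_colon_singleton.mp (hcolon hxI))
      (Submodule.mem_colon_singleton.mp (hcolon (hlI y (by simp))))
  exact ⟨a, ha.symm⟩

theorem stmt_3 {R : Type*} [CommRing R] {M : Type*} [AddCommGroup M] [Module R M]
    {m k : ℕ} (b : Module.Basis (Fin m) R M) (hk1 : 1 ≤ k) (hkm : k ≤ m)
    (ω : Fin k → M)
    (hDC : ∃ l : List R, l.length = 2 ∧
      (∀ x ∈ l, x ∈ coeffIdeal R (wedgeProd R ω Finset.univ)) ∧ IsRegSeq R l)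
    (η : M) (hη : wedgeProd R ω Finset.univ * ExteriorAlgebra.ι R η = 0) :
    ∃ a : Fin k → R, η = ∑ i, a i • ω i :=
  stmt_3_general b ω hDC η hη
end

section
/- Let ω ∈ M and let I(ω) be the ideal generated by the coefficients of ω in a basis of M. If p < depth(I(ω)) (equivalently, I(ω) contains a regular sequence of length p + 1) and η ∈ Λ^p M satisfies ω ∧ η = 0, then η = ω ∧ γ for some γ ∈ Λ^{p−1} M. (Equivalently, the Koszul complex Λ^q M → Λ^{q+1} M given by exterior multiplication by ω is exact in degrees below depth(I(ω)).) -/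
/-!
Statement 5 (Corollary 1 (iii); exactness of the Koszul complex): let `ω ∈ M` and let
`I(ω)` be the ideal generated by the coefficients of `ω` in a basis of `M`.  If
`p < depth I(ω)`, i.e. `I(ω)` contains a regular sequence of length `p + 1`, and
`η ∈ Λ^p M` satisfies `ω ∧ η = 0`, then `η = ω ∧ γ` for some `γ ∈ Λ^{p−1} M`.
-/

open ExteriorAlgebra

/-!
Write the regular sequence as `aᵢ = dᵢ ω` for linear functionals `dᵢ`, and let
`Jₖ = (a₁, …, aₖ)`. One shows, by induction on `p`, that `η ↦ ω ∧ η` is exact at `⋀^p M`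
modulo `Jₖ` whenever `k + p` is less than the length of the sequence. Contraction with
`d = d_{k+1}` is a homotopy: `a_{k+1} η = d⌋(ω ∧ η) + ω ∧ (d⌋η)`. Exactness modulo `J_{k+1}`
in degree `p - 1`, applied to `d⌋η`, produces `δ` with `a_{k+1} (η - ω ∧ δ) ∈ Jₖ ⋀^p M`; as
`a_{k+1}` is regular modulo `Jₖ` and `⋀^p M` is free, `η - ω ∧ δ ∈ Jₖ ⋀^p M`. For `k = 0`
this is the theorem.
-/

section IdealSmul

variable {R F G : Type*} [CommRing R] [AddCommGroup F] [Module R F] [AddCommGroup G] [Module R G]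

theorem LinearMap.map_mem_ideal_smul (f : F →ₗ[R] G) {J : Ideal R} {N : Submodule R F}
    {N' : Submodule R G} (hf : ∀ y ∈ N, f y ∈ N') {x : F} (hx : x ∈ J • N) : f x ∈ J • N' := by
  have hfx : f x ∈ (J • N).map f := Submodule.mem_map_of_mem hx
  rw [Submodule.map_smul''] at hfx
  exact Submodule.smul_mono le_rfl (Submodule.map_le_iff_le_comap.mpr hf) hfx

theorem LinearMap.apply_mem_of_mem_ideal_smul (f : F →ₗ[R] R) {J : Ideal R}
    {N : Submodule R F} {x : F} (hx : x ∈ J • N) : f x ∈ J := by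
  simpa using f.map_mem_ideal_smul (N' := ⊤) (fun _ _ => Submodule.mem_top) hx

theorem Module.Basis.mem_ideal_smul_top_iff {ι : Type*} (B : Module.Basis ι R F) (J : Ideal R)
    (x : F) : x ∈ J • (⊤ : Submodule R F) ↔ ∀ i, B.repr x i ∈ J := by
  refine ⟨fun hx i => (B.coord i).apply_mem_of_mem_ideal_smul hx, fun hx => ?_⟩
  rw [← B.linearCombination_repr x, Finsupp.linearCombination_apply]
  exact Submodule.sum_mem _ fun i _ => Submodule.smul_mem_smul (hx i) Submodule.mem_top

theorem Module.Free.mem_ideal_smul_top_of_smul_mem [Module.Free R F] {J : Ideal R} {a : R}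
    (ha : ∀ r, a * r ∈ J → r ∈ J) {x : F} (h : a • x ∈ J • (⊤ : Submodule R F)) :
    x ∈ J • (⊤ : Submodule R F) := by
  rw [(Module.Free.chooseBasis R F).mem_ideal_smul_top_iff] at h ⊢
  exact fun i => ha _ (by simpa using h i)

theorem Submodule.mem_ideal_smul_of_smul_mem {N : Submodule R F} [Module.Free R N]
    {J : Ideal R} {a : R} (ha : ∀ r, a * r ∈ J → r ∈ J) {x : F} (hx : x ∈ N)
    (h : a • x ∈ J • N) : x ∈ J • N := by
  rw [← Submodule.mem_smul_top_iff (N := N) (x := ⟨x, hx⟩)]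
  refine Module.Free.mem_ideal_smul_top_of_smul_mem ha ?_
  rwa [Submodule.mem_smul_top_iff]

end IdealSmul

namespace ExteriorAlgebra

variable {R : Type*} [CommRing R] {M : Type*} [AddCommGroup M] [Module R M]

theorem ι_mul_mem_exteriorPower (ω : M) {p : ℕ} {y : ExteriorAlgebra R M}
    (hy : y ∈ ⋀[R]^p M) : ι R ω * y ∈ ⋀[R]^(p + 1) M := by
  rw [exteriorPower, pow_succ']
  exact Submodule.mul_mem_mul (LinearMap.mem_range_self _ ω) hy

theorem contractLeft_eq_zero_of_mem_exteriorPower_zero (d : Module.Dual R M)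
    {x : ExteriorAlgebra R M} (hx : x ∈ ⋀[R]^0 M) : CliffordAlgebra.contractLeft d x = 0 := by
  rw [exteriorPower, pow_zero, Submodule.one_eq_range] at hx
  obtain ⟨r, rfl⟩ := hx
  simp

theorem contractLeft_mem_exteriorPower (d : Module.Dual R M) {p : ℕ} {x : ExteriorAlgebra R M}
    (hx : x ∈ ⋀[R]^(p + 1) M) : CliffordAlgebra.contractLeft d x ∈ ⋀[R]^p M := by
  induction p generalizing x with
  | zero =>
    rw [exteriorPower, pow_one] at hx
    obtain ⟨v, rfl⟩ := hx
    rw [CliffordAlgebra.contractLeft_ι, exteriorPower, pow_zero, Submodule.one_eq_range]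
    exact LinearMap.mem_range_self _ _
  | succ q ih =>
    rw [exteriorPower, pow_succ'] at hx
    induction hx using Submodule.mul_induction_on' with
    | mem_mul_mem a ha y hy =>
      obtain ⟨v, rfl⟩ := ha
      rw [CliffordAlgebra.contractLeft_ι_mul]
      exact Submodule.sub_mem _ (Submodule.smul_mem _ _ hy) (ι_mul_mem_exteriorPower v (ih hy))
    | add y z _ _ hy hz =>
      rw [map_add]
      exact Submodule.add_mem _ hy hz

theorem exists_dual_apply_eq_of_mem_coeffIdeal {ω : M} {a : R}
    (ha : a ∈ coeffIdeal R (ι R ω)) : ∃ d : Module.Dual R M, d ω = a := by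
  have hrange : (Set.range fun φ : Module.Dual R (ExteriorAlgebra R M) => φ (ι R ω)) =
      ((LinearMap.applyₗ (R := R) (ι R ω) :
        Module.Dual R (ExteriorAlgebra R M) →ₗ[R] R).range : Set R) := rfl
  rw [coeffIdeal, hrange, Ideal.span_eq] at ha
  obtain ⟨φ, rfl⟩ := ha
  exact ⟨φ ∘ₗ ι R, rfl⟩

end ExteriorAlgebra

section Koszul

variable {R : Type*} [CommRing R] {M : Type*} [AddCommGroup M] [Module R M]

def KoszulExactMod (J : Ideal R) (ω : M) (p : ℕ) : Prop :=
  ∀ η ∈ ⋀[R]^p M, ι R ω * η ∈ J • ⋀[R]^(p + 1) M →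
    ∃ γ ∈ ⋀[R]^(p - 1) M, η - ι R ω * γ ∈ J • ⋀[R]^p M

variable [Module.Free R M] {J : Ideal R} {ω : M} {d : Module.Dual R M}

theorem koszulExactMod_zero (hreg : ∀ r, d ω * r ∈ J → r ∈ J) : KoszulExactMod J ω 0 := by
  intro η hη hωη
  refine ⟨0, Submodule.zero_mem _, ?_⟩
  rw [mul_zero, sub_zero]
  refine Submodule.mem_ideal_smul_of_smul_mem hreg hη ?_
  have hcontract : CliffordAlgebra.contractLeft d (ι R ω * η) = d ω • η := by
    rw [CliffordAlgebra.contractLeft_ι_mul, contractLeft_eq_zero_of_mem_exteriorPower_zero d hη,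
      mul_zero, sub_zero]
  rw [← hcontract]
  exact LinearMap.map_mem_ideal_smul _ (fun _ => contractLeft_mem_exteriorPower d) hωη

theorem koszulExactMod_succ (hreg : ∀ r, d ω * r ∈ J → r ∈ J) {q : ℕ}
    (ih : KoszulExactMod (J ⊔ Ideal.span {d ω}) ω q) : KoszulExactMod J ω (q + 1) := by
  intro η hη hωη
  set ξ := CliffordAlgebra.contractLeft d η
  set w := CliffordAlgebra.contractLeft d (ι R ω * η) with hw_def
  have hw : w ∈ J • ⋀[R]^(q + 1) M :=
    LinearMap.map_mem_ideal_smul _ (fun _ => contractLeft_mem_exteriorPower d) hωη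
  have hcontract : d ω • η = w + ι R ω * ξ := by
    rw [hw_def, CliffordAlgebra.contractLeft_ι_mul]; abel
  have hωξ : ι R ω * ξ ∈ (J ⊔ Ideal.span {d ω}) • ⋀[R]^(q + 1) M := by
    rw [eq_sub_of_add_eq' hcontract.symm]
    exact Submodule.sub_mem _
      (Submodule.smul_mem_smul (Ideal.mem_sup_right (Ideal.mem_span_singleton_self _)) hη)
      (Submodule.smul_mono le_sup_left le_rfl hw)
  obtain ⟨γ, -, hγ⟩ := ih ξ (contractLeft_mem_exteriorPower d hη) hωξ
  rw [Submodule.sup_smul] at hγ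
  obtain ⟨ζ, hζ, z, hz, hsum⟩ := Submodule.mem_sup.mp hγ
  rw [Submodule.ideal_span_singleton_smul] at hz
  obtain ⟨δ, hδ, rfl⟩ := (Submodule.mem_smul_pointwise_iff_exists _ _ _).mp hz
  refine ⟨δ, hδ, Submodule.mem_ideal_smul_of_smul_mem hreg
    (Submodule.sub_mem _ hη (ι_mul_mem_exteriorPower ω hδ)) ?_⟩
  -- `ω ∧ ω = 0`, so multiplying `ξ - ω ∧ γ = ζ + (d ω) δ` by `ω` kills `γ`
  have hωζ : ι R ω * ζ + d ω • (ι R ω * δ) = ι R ω * ξ := by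
    rw [← Algebra.mul_smul_comm, ← mul_add, hsum, mul_sub, ← mul_assoc, ι_sq_zero, zero_mul,
      sub_zero]
  have hkey : d ω • (η - ι R ω * δ) = w + ι R ω * ζ := by
    rw [smul_sub, hcontract, ← hωζ]; abel
  rw [hkey]
  exact Submodule.add_mem _ hw
    (LinearMap.map_mem_ideal_smul (LinearMap.mulLeft R (ι R ω))
      (fun _ => ι_mul_mem_exteriorPower ω) hζ)

theorem Ideal.span_take_succ (l : List R) {k : ℕ} (hk : k < l.length) :
    Ideal.span {x | x ∈ l.take (k + 1)} = Ideal.span {x | x ∈ l.take k} ⊔ Ideal.span {l[k]} := by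
  rw [← Ideal.span_union]
  congr 1
  ext x
  simp only [Set.mem_union, Set.mem_ofPred_eq, Set.mem_singleton_iff, List.take_add_one,
    List.getElem?_eq_getElem hk, Option.toList_some, List.mem_append, List.mem_singleton]

theorem koszulExactMod_span_take (l : List R) (hdual : ∀ x ∈ l, ∃ d : Module.Dual R M, d ω = x)
    (hreg : ∀ i : Fin l.length, ∀ r : R,
      l.get i * r ∈ Ideal.span {x | x ∈ l.take i.1} → r ∈ Ideal.span {x | x ∈ l.take i.1})
    {p k : ℕ} (hpk : k + p < l.length) :
    KoszulExactMod (Ideal.span {x | x ∈ l.take k}) ω p := by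
  have hdual_reg : ∀ k (hk : k < l.length), ∃ d : Module.Dual R M, d ω = l[k] ∧
      ∀ r, d ω * r ∈ Ideal.span {x | x ∈ l.take k} → r ∈ Ideal.span {x | x ∈ l.take k} := by
    intro k hk
    obtain ⟨d, hd⟩ := hdual l[k] (List.getElem_mem hk)
    exact ⟨d, hd, hd ▸ hreg ⟨k, hk⟩⟩
  induction p generalizing k with
  | zero =>
    obtain ⟨d, -, hregk⟩ := hdual_reg k (by omega)
    exact koszulExactMod_zero hregk
  | succ q ih =>
    obtain ⟨d, hd, hregk⟩ := hdual_reg k (by omega)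
    refine koszulExactMod_succ hregk ?_
    rw [hd, ← Ideal.span_take_succ l (by omega)]
    exact ih (by omega)

end Koszul

theorem stmt_5 {R : Type*} [CommRing R] {M : Type*} [AddCommGroup M] [Module R M]
    {m : ℕ} (b : Module.Basis (Fin m) R M)
    (ω : M) (p : ℕ)
    (hDC : ∃ l : List R, l.length = p + 1 ∧
      (∀ x ∈ l, x ∈ coeffIdeal R (ExteriorAlgebra.ι R ω)) ∧ IsRegSeq R l)
    (η : ExteriorAlgebra R M) (hη : η ∈ ⋀[R]^p M)
    (hωη : ExteriorAlgebra.ι R ω * η = 0) :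
    ∃ γ : ExteriorAlgebra R M, γ ∈ ⋀[R]^(p - 1) M ∧
      η = ExteriorAlgebra.ι R ω * γ := by
  obtain ⟨l, hlen, hcoeff, -, hreg⟩ := hDC
  have : Module.Free R M := Module.Free.of_basis b
  have hexact : KoszulExactMod (Ideal.span {x | x ∈ l.take 0}) ω p :=
    koszulExactMod_span_take l (fun x hx => exists_dual_apply_eq_of_mem_coeffIdeal (hcoeff x hx))
      hreg (by omega)
  obtain ⟨γ, hγ, hηγ⟩ := hexact η hη (by rw [hωη]; exact Submodule.zero_mem _)
  refine ⟨γ, hγ, ?_⟩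
  simpa [sub_eq_zero] using hηγ
end

section
/- Assume I(Ω) contains a non-zero-divisor of R, and let a ∈ I(Ω), n ≥ 0, and integers p ≥ r ≥ 1 be given. If a^n · η = Σ_{J ∈ 𝒥(r,k)} ω_J ∧ γ'_J and a^n · η = Σ_{J ∈ 𝒥(r,k)} ω_J ∧ γ''_J are two representations of the same element with γ'_J, γ''_J ∈ Λ^{p−r} M, then for every J ∈ 𝒥(r,k) and all α₁,…,α_{p−r} ∈ K = {g ∈ M* : g(ω_i) = 0 for i = 1,…,k}, one has γ'_J(α₁,…,α_{p−r}) = γ''_J(α₁,…,α_{p−r}), where elements of Λ^{p−r} M are evaluated as alternating (p−r)-linear forms on the dual module M*. -/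
/-!
Subtracting the two representations gives `∑_J ω_J ∧ δ_J = 0` with `δ_J = γ'_J - γ''_J`.
Multiplying on the left by `ω_{J₀ᶜ}` kills every term except `J = J₀`, since any other `J` of
the same size meets `J₀ᶜ`; what remains is `±Ω ∧ δ_{J₀} = 0`. Contracting with
`α₁, …, α_{p-r}`, which vanish on every `ωᵢ`, passes through `Ω` up to sign and turns the
degree-`(p-r)` element `δ_{J₀}` into the scalar `δ_{J₀}(α)`, so `δ_{J₀}(α) • Ω = 0`. Then
`δ_{J₀}(α)` annihilates `I(Ω)`, which contains a non-zero-divisor, so `δ_{J₀}(α) = 0`.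
-/

open ExteriorAlgebra

/-- Evaluation of a degree-`q` element of the exterior algebra of `M` as an alternating
`q`-linear form on the dual module `M*`: on a decomposable element `v₁ ∧ ⋯ ∧ v_q` and
functionals `α₁, …, α_q` it gives `det (αᵢ (vⱼ))`. -/
noncomputable def evalForm {R : Type*} [CommRing R] {M : Type*} [AddCommGroup M] [Module R M]
    (q : ℕ) (α : Fin q → Module.Dual R M) : ExteriorAlgebra R M →ₗ[R] R :=
  ExteriorAlgebra.liftAlternating
    (Function.update (0 : ∀ i : ℕ, M [⋀^Fin i]→ₗ[R] R) q
      (Matrix.detRowAlternating.compLinearMap (LinearMap.pi fun i => α i)))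

namespace ExteriorAlgebra

variable {R : Type*} [CommRing R] {M : Type*} [AddCommGroup M] [Module R M]

theorem contractLeft_ιMulti_mul (d : Module.Dual R M) {n : ℕ} {v : Fin n → M}
    (hv : ∀ j, d (v j) = 0) (x : ExteriorAlgebra R M) :
    CliffordAlgebra.contractLeft d (ιMulti R n v * x) =
      (-1 : R) ^ n • (ιMulti R n v * CliffordAlgebra.contractLeft d x) := by
  induction n with
  | zero => simp [ιMulti_zero_apply]
  | succ n ih =>
    rw [ιMulti_succ_apply, mul_assoc, CliffordAlgebra.contractLeft_ι_mul, hv,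
      ih (v := Matrix.vecTail v) (fun j => hv j.succ), zero_smul, zero_sub, pow_succ', mul_smul,
      neg_one_smul, mul_smul_comm, mul_assoc]

theorem contractLeft_ιMulti_succ (d : Module.Dual R M) {n : ℕ} (v : Fin (n + 1) → M) :
    CliffordAlgebra.contractLeft d (ιMulti R (n + 1) v) =
      ∑ j : Fin (n + 1), ((-1 : R) ^ (j : ℕ) * d (v j)) • ιMulti R n (v ∘ j.succAbove) := by
  induction n with
  | zero =>
    simp [ιMulti_succ_apply, ιMulti_zero_apply, Algebra.smul_def]
  | succ n ih =>
    rw [ιMulti_succ_apply, CliffordAlgebra.contractLeft_ι_mul, ih, Finset.mul_sum, sub_eq_add_neg,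
      ← Finset.sum_neg_distrib, Fin.sum_univ_succ (n := n + 1)]
    congr 1
    · simp [Algebra.smul_def, Matrix.vecTail, Function.comp_def]
    · refine Finset.sum_congr rfl fun j _ => ?_
      rw [ιMulti_succ_apply, mul_smul_comm, ← neg_smul, Fin.val_succ, pow_succ]
      simp [Matrix.vecTail, Function.comp_def, Fin.succ_succAbove_succ]

noncomputable def iteratedContractLeft :
    (q : ℕ) → (Fin q → Module.Dual R M) → ExteriorAlgebra R M →ₗ[R] ExteriorAlgebra R M
  | 0, _ => LinearMap.id
  | q + 1, α => iteratedContractLeft q (fun i => α i.succ) ∘ₗ CliffordAlgebra.contractLeft (α 0)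

theorem iteratedContractLeft_ιMulti_mul {q : ℕ} (α : Fin q → Module.Dual R M) {n : ℕ}
    {v : Fin n → M} (hv : ∀ i j, α i (v j) = 0) (x : ExteriorAlgebra R M) :
    iteratedContractLeft q α (ιMulti R n v * x) =
      (-1 : R) ^ (n * q) • (ιMulti R n v * iteratedContractLeft q α x) := by
  induction q generalizing x with
  | zero => simp [iteratedContractLeft]
  | succ q ih =>
    simp only [iteratedContractLeft, LinearMap.comp_apply]
    rw [contractLeft_ιMulti_mul _ (hv 0), map_smul, ih _ (fun i => hv i.succ), smul_smul,
      ← pow_add, mul_add_one, add_comm]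

theorem iteratedContractLeft_ιMulti {q : ℕ} (α : Fin q → Module.Dual R M) (v : Fin q → M) :
    iteratedContractLeft q α (ιMulti R q v) =
      algebraMap R _ (Matrix.of fun i j => α i (v j)).det := by
  induction q with
  | zero => simp [iteratedContractLeft, ιMulti_zero_apply]
  | succ q ih =>
    rw [iteratedContractLeft, LinearMap.comp_apply, contractLeft_ιMulti_succ, map_sum,
      Matrix.det_succ_row_zero, map_sum]
    refine Finset.sum_congr rfl fun j _ => ?_
    rw [LinearMap.map_smul, ih, Algebra.smul_def, ← map_mul]
    rfl

theorem evalForm_ιMulti {q : ℕ} (α : Fin q → Module.Dual R M) (v : Fin q → M) :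
    evalForm q α (ιMulti R q v) = (Matrix.of fun i j => α i (v j)).det := by
  rw [evalForm, liftAlternating_apply_ιMulti, Function.update_self,
    AlternatingMap.compLinearMap_apply, ← Matrix.det_transpose]
  rfl

theorem iteratedContractLeft_eq_algebraMap_evalForm {q : ℕ} (α : Fin q → Module.Dual R M)
    {x : ExteriorAlgebra R M} (hx : x ∈ ⋀[R]^q M) :
    iteratedContractLeft q α x = algebraMap R _ (evalForm q α x) := by
  rw [← ιMulti_span_fixedDegree] at hx
  induction hx using Submodule.span_induction with
  | mem x h =>
    obtain ⟨v, rfl⟩ := h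
    rw [iteratedContractLeft_ιMulti, evalForm_ιMulti]
  | zero => simp
  | add x y _ _ ihx ihy => rw [map_add, map_add, ihx, ihy, map_add]
  | smul a x _ ihx => rw [map_smul, ihx, map_smul, smul_eq_mul, map_mul, Algebra.smul_def]

theorem evalForm_smul_ιMulti_eq_zero {q : ℕ} (α : Fin q → Module.Dual R M) {n : ℕ}
    {v : Fin n → M} (hv : ∀ i j, α i (v j) = 0) {x : ExteriorAlgebra R M} (hx : x ∈ ⋀[R]^q M)
    (h : ιMulti R n v * x = 0) :
    evalForm q α x • ιMulti R n v = 0 := by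
  have := congrArg (iteratedContractLeft q α) h
  rwa [iteratedContractLeft_ιMulti_mul α hv, map_zero,
    (isUnit_neg_one.pow _).smul_eq_zero, iteratedContractLeft_eq_algebraMap_evalForm α hx,
    ← Algebra.commutes, ← Algebra.smul_def] at this

end ExteriorAlgebra

section wedgeProd

variable {R : Type*} [CommRing R] {M : Type*} [AddCommGroup M] [Module R M] {k : ℕ}
  (ω : Fin k → M)

theorem wedgeProd_eq_ιMulti {n : ℕ} {s : Finset (Fin k)} (hs : s.card = n) :
    wedgeProd R ω s = ιMulti R n (ω ∘ s.orderEmbOfFin hs) := by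
  rw [wedgeProd, ιMulti_apply]
  congr 1
  refine List.ext_getElem (by simp [hs]) fun i _ _ => ?_
  simp [Finset.orderEmbOfFin_apply]

theorem wedgeProd_eq_ιMulti_family {n : ℕ} (s : Set.powersetCard (Fin k) n) :
    wedgeProd R ω s = ιMulti_family R n ω s :=
  wedgeProd_eq_ιMulti ω s.prop

theorem wedgeProd_mul_wedgeProd_of_not_disjoint {s t : Finset (Fin k)} (h : ¬ Disjoint s t) :
    wedgeProd R ω s * wedgeProd R ω t = 0 := by
  simpa only [← wedgeProd_eq_ιMulti_family] using
    ιMulti_family_mul_of_not_disjoint R ω (⟨s, rfl⟩ : Set.powersetCard _ s.card) ⟨t, rfl⟩ h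

theorem wedgeProd_mul_wedgeProd_of_disjoint {s t : Finset (Fin k)} (h : Disjoint s t) :
    ∃ ε : ℤˣ, wedgeProd R ω s * wedgeProd R ω t = ε • wedgeProd R ω (s ∪ t) :=
  ⟨_, by simpa only [← wedgeProd_eq_ιMulti_family, Set.powersetCard.coe_disjUnion,
    Finset.disjUnion_eq_union] using
    ιMulti_family_mul_of_disjoint R ω (⟨s, rfl⟩ : Set.powersetCard _ s.card) ⟨t, rfl⟩ h⟩

theorem wedgeProd_univ_mul_eq_zero_of_sum_eq_zero {r : ℕ}
    {δ : Finset (Fin k) → ExteriorAlgebra R M}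
    (h : ∑ J ∈ Finset.univ.powersetCard r, wedgeProd R ω J * δ J = 0) {J₀ : Finset (Fin k)}
    (hJ₀ : J₀ ∈ Finset.univ.powersetCard r) :
    wedgeProd R ω Finset.univ * δ J₀ = 0 := by
  have hcollapse : wedgeProd R ω J₀ᶜ * (wedgeProd R ω J₀ * δ J₀) = 0 := by
    rw [← mul_zero (wedgeProd R ω J₀ᶜ), ← h, Finset.mul_sum, Finset.sum_eq_single_of_mem J₀ hJ₀]
    intro J hJ hne
    have hJ : ¬ J ⊆ J₀ := fun hsub => hne (Finset.eq_of_subset_of_card_le hsub (by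
      rw [(Finset.mem_powersetCard.mp hJ).2, (Finset.mem_powersetCard.mp hJ₀).2]))
    rw [← mul_assoc, wedgeProd_mul_wedgeProd_of_not_disjoint ω
      (by rwa [disjoint_compl_left_iff]), zero_mul]
  obtain ⟨ε, hε⟩ := wedgeProd_mul_wedgeProd_of_disjoint (R := R) ω (disjoint_compl_left (a := J₀))
  rwa [← mul_assoc, hε, Finset.union_comm, Finset.union_compl, smul_mul_assoc,
    smul_eq_zero_iff_eq] at hcollapse

end wedgeProd

theorem mul_eq_zero_of_smul_eq_zero_of_mem_coeffIdeal_s8 {R : Type*} [CommRing R] {M : Type*}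
    [AddCommGroup M] [Module R M] {x : ExteriorAlgebra R M} {c y : R} (h : c • x = 0)
    (hy : y ∈ coeffIdeal R x) : c * y = 0 := by
  suffices coeffIdeal R x ≤ LinearMap.ker (LinearMap.mulLeft R c) from this hy
  refine Ideal.span_le.mpr (Set.range_subset_iff.mpr fun φ => ?_)
  simp [← smul_eq_mul, ← map_smul, h]

theorem stmt_8_general {R : Type*} [CommRing R] {M : Type*} [AddCommGroup M] [Module R M]
    {k : ℕ} (ω : Fin k → M)
    (hnzd : ∃ c ∈ coeffIdeal R (wedgeProd R ω Finset.univ), c ∈ nonZeroDivisors R)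
    (a : R) (n : ℕ) (p r : ℕ) (η : ExteriorAlgebra R M)
    (γ' γ'' : Finset (Fin k) → ExteriorAlgebra R M)
    (hγ' : ∀ J, γ' J ∈ ⋀[R]^(p - r) M) (hγ'' : ∀ J, γ'' J ∈ ⋀[R]^(p - r) M)
    (hrep' : a ^ n • η = ∑ J ∈ Finset.univ.powersetCard r, wedgeProd R ω J * γ' J)
    (hrep'' : a ^ n • η = ∑ J ∈ Finset.univ.powersetCard r, wedgeProd R ω J * γ'' J) :
    ∀ J ∈ Finset.univ.powersetCard r,
      ∀ α : Fin (p - r) → Module.Dual R M,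
        (∀ i j, α i (ω j) = 0) →
        evalForm (p - r) α (γ' J) = evalForm (p - r) α (γ'' J) := by
  intro J hJ α hα
  obtain ⟨c, hc, hc_nzd⟩ := hnzd
  have hsum : ∑ J ∈ Finset.univ.powersetCard r, wedgeProd R ω J * (γ' J - γ'' J) = 0 := by
    simp only [mul_sub, Finset.sum_sub_distrib, ← hrep', ← hrep'', sub_self]
  have hΩ := wedgeProd_univ_mul_eq_zero_of_sum_eq_zero ω hsum hJ
  have hsmul : evalForm (p - r) α (γ' J - γ'' J) • wedgeProd R ω Finset.univ = 0 := by
    rw [wedgeProd_eq_ιMulti ω (Finset.card_fin k)] at hΩ ⊢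
    exact evalForm_smul_ιMulti_eq_zero α (fun i j => hα i _) (sub_mem (hγ' J) (hγ'' J)) hΩ
  rw [← sub_eq_zero, ← map_sub]
  exact (mem_nonZeroDivisors_iff.mp hc_nzd).2 _
    (mul_eq_zero_of_smul_eq_zero_of_mem_coeffIdeal_s8 hsmul hc)

theorem stmt_8 {R : Type*} [CommRing R] {M : Type*} [AddCommGroup M] [Module R M]
    {m k : ℕ} (b : Module.Basis (Fin m) R M) (hk1 : 1 ≤ k) (hkm : k ≤ m)
    (ω : Fin k → M)
    (hnzd : ∃ c ∈ coeffIdeal R (wedgeProd R ω Finset.univ), c ∈ nonZeroDivisors R)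
    (a : R) (ha : a ∈ coeffIdeal R (wedgeProd R ω Finset.univ)) (n : ℕ)
    (p r : ℕ) (hr1 : 1 ≤ r) (hrp : r ≤ p)
    (η : ExteriorAlgebra R M) (hη : η ∈ ⋀[R]^p M)
    (γ' γ'' : Finset (Fin k) → ExteriorAlgebra R M)
    (hγ' : ∀ J, γ' J ∈ ⋀[R]^(p - r) M) (hγ'' : ∀ J, γ'' J ∈ ⋀[R]^(p - r) M)
    (hrep' : a ^ n • η = ∑ J ∈ Finset.univ.powersetCard r, wedgeProd R ω J * γ' J)
    (hrep'' : a ^ n • η = ∑ J ∈ Finset.univ.powersetCard r, wedgeProd R ω J * γ'' J) :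
    ∀ J ∈ Finset.univ.powersetCard r,
      ∀ α : Fin (p - r) → Module.Dual R M,
        (∀ i j, α i (ω j) = 0) →
        evalForm (p - r) α (γ' J) = evalForm (p - r) α (γ'' J) :=
  stmt_8_general ω hnzd a n p r η γ' γ'' hγ' hγ'' hrep' hrep''
end
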